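/- arXiv:1908.01514 — 3 statements merged into one kernel-verified Lean document; each statement's English description precedes it below -/
import Mathlib

section
/- Let G = (V_E ⊍ V_V, E) be a bipartite graph with a matching M in which no variable vertex is matched to two equation vertices, let F_j ∈ V_E be an exposed (unmatched) equation vertex, and suppose there is no augmenting path with respect to M starting at F_j. Let C = {F ∈ V_E : there is an alternating path from F_j to F}, and let W ⊆ V_V be the set of variable vertices adjacent to some vertex of C. Then |C| = |W| + 1. -/
/-- One alternating "hop" in the bipartite graph: from equation `e`, go along a
non-matching edge to a variable `v`, then along a matching edge to equation `e'`. -/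
def AltStep {E V : Type*} (adj M : E → V → Prop) (e e' : E) : Prop :=
  ∃ v, adj e v ∧ ¬ M e v ∧ M e' v

/-- There is an alternating path (with respect to the matching `M`) from `f` to `e`. -/
def AltReach {E V : Type*} (adj M : E → V → Prop) : E → E → Prop :=
  Relation.ReflTransGen (AltStep adj M)

theorem stmt0 {E V : Type*} [Fintype E] [Fintype V]
    (adj M : E → V → Prop)
    (hsub : ∀ e v, M e v → adj e v)
    (hfun : ∀ e v w, M e v → M e w → v = w)
    (hinj : ∀ e f v, M e v → M f v → e = f)
    (Fj : E) (hexp : ¬ ∃ v, M Fj v)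
    (hnoaug : ¬ ∃ e v, AltReach adj M Fj e ∧ adj e v ∧ ¬ ∃ e', M e' v) :
    ({e | AltReach adj M Fj e} : Set E).ncard
      = ({v | ∃ e, AltReach adj M Fj e ∧ adj e v} : Set V).ncard + 1 := by
  classical
  set C : Set E := {e | AltReach adj M Fj e} with hC
  set W : Set V := {v | ∃ e, AltReach adj M Fj e ∧ adj e v} with hW
  have hFjC : Fj ∈ C := Relation.ReflTransGen.refl
  push_neg at hnoaug
  -- every vertex in W is matched
  have hmatched : ∀ v ∈ W, ∃ e, M e v := by
    rintro v ⟨e, he, hadj⟩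
    exact hnoaug e v he hadj
  let f : V → E := fun v => if h : ∃ e, M e v then h.choose else Fj
  have hf : ∀ v e, M e v → f v = e := by
    intro v e h
    have hex : ∃ e, M e v := ⟨e, h⟩
    simp only [f, dif_pos hex]
    exact hinj _ _ _ hex.choose_spec h
  have hfM : ∀ v, (∃ e, M e v) → M (f v) v := by
    intro v hex
    simp only [f, dif_pos hex]
    exact hex.choose_spec
  have hbij : Set.BijOn f W (C \ {Fj}) := by
    refine ⟨?_, ?_, ?_⟩
    · rintro v ⟨e, he, hadj⟩
      obtain ⟨e', he'⟩ := hnoaug e v he hadj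
      rw [hf v e' he']
      constructor
      · by_cases hMe : M e v
        · rwa [hinj e' e v he' hMe]
        · exact he.tail ⟨v, hadj, hMe, he'⟩
      · intro h
        exact hexp ⟨v, h ▸ he'⟩
    · intro v hv w hw hvw
      have h1 : M (f v) v := hfM v (hmatched v hv)
      have h2 : M (f w) w := hfM w (hmatched w hw)
      exact hfun (f v) v w h1 (hvw ▸ h2)
    · rintro e ⟨he, hne⟩
      obtain (rfl | ⟨b, hb, v, hadj, hnM, hM⟩) := Relation.ReflTransGen.cases_tail he
      · exact absurd rfl hne
      · exact ⟨v, ⟨b, hb, hadj⟩, hf v e hM⟩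
  have himg : f '' W = C \ {Fj} := hbij.image_eq
  have hcard : W.ncard = (C \ {Fj}).ncard := by
    rw [← himg, Set.ncard_image_of_injOn hbij.injOn]
  rw [hcard]
  exact (Set.ncard_diff_singleton_add_one hFjC (Set.toFinite C)).symm
end

section
/- Let G = (V_E ⊍ V_V, E) be a bipartite graph with matching M, let F_j be an exposed equation vertex with no augmenting path starting at F_j, and let C = {F ∈ V_E : there is an alternating path from F_j to F} ∪ {F_j}. Then every equation vertex in C other than F_j is matched by M to a variable vertex adjacent to C, and every proper subset C' ⊊ C satisfies |C'| ≤ |N(C')|, where N(C') is the set of variable vertices adjacent to some vertex of C'. -/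
theorem stmt1 {E V : Type*} [Fintype E] [Fintype V]
    (adj M : E → V → Prop)
    (hsub : ∀ e v, M e v → adj e v)
    (hfun : ∀ e v w, M e v → M e w → v = w)
    (hinj : ∀ e f v, M e v → M f v → e = f)
    (Fj : E) (hexp : ¬ ∃ v, M Fj v)
    (hnoaug : ¬ ∃ e v, AltReach adj M Fj e ∧ adj e v ∧ ¬ ∃ e', M e' v) :
    (∀ e, AltReach adj M Fj e → e ≠ Fj →
        ∃ v, M e v ∧ ∃ e', AltReach adj M Fj e' ∧ adj e' v) ∧
      ∀ C' : Set E, C' ⊂ {e | AltReach adj M Fj e} →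
        C'.ncard ≤ ({v | ∃ e ∈ C', adj e v} : Set V).ncard := by
  classical
  have hmatched : ∀ e, AltReach adj M Fj e → e ≠ Fj →
      ∃ v, M e v ∧ ∃ e', AltReach adj M Fj e' ∧ adj e' v := by
    intro e he hne
    rcases he.cases_tail with h | ⟨c, hc, v, hadj, _, hm⟩
    · exact absurd h hne
    · exact ⟨v, hm, c, hc, hadj⟩
  refine ⟨hmatched, ?_⟩
  intro C' hC'
  have hsubC : C' ⊆ {e | AltReach adj M Fj e} := hC'.subset
  have hNfin : ({v | ∃ e ∈ C', adj e v} : Set V).Finite := Set.toFinite _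
  by_cases hFj : Fj ∈ C'
  · -- there is an AltStep leaving C'
    have hopen : ∃ e ∈ C', ∃ e', AltStep adj M e e' ∧ e' ∉ C' := by
      by_contra h
      push_neg at h
      have hclosed : ∀ e, AltReach adj M Fj e → e ∈ C' := by
        intro e he
        induction he with
        | refl => exact hFj
        | tail hb hs ih => exact h _ ih _ hs
      exact hC'.not_subset (fun e he => hclosed e he)
    obtain ⟨e₀, he₀, e₁, ⟨v₀, hadj₀, hnm₀, hm₁⟩, he₁⟩ := hopen
    have hv₀N : v₀ ∈ ({v | ∃ e ∈ C', adj e v} : Set V) := ⟨e₀, he₀, hadj₀⟩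
    have hv₀ : ∀ f ∈ C', ¬ M f v₀ := by
      intro f hf hMf
      exact he₁ ((hinj f e₁ v₀ hMf hm₁) ▸ hf)
    have hmv : ∀ e ∈ C', e ≠ Fj → ∃ v, M e v := by
      intro e he hne
      obtain ⟨v, hv, -⟩ := hmatched e (hsubC he) hne
      exact ⟨v, hv⟩
    set g : E → V := fun e =>
      if e = Fj then v₀ else if h : ∃ v, M e v then h.choose else v₀ with hg
    have hgM : ∀ e ∈ C', e ≠ Fj → M e (g e) := by
      intro e he hne
      have h := hmv e he hne
      simp only [hg, if_neg hne, dif_pos h]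
      exact h.choose_spec
    apply Set.ncard_le_ncard_of_injOn g ?_ ?_ hNfin
    · intro e he
      by_cases hne : e = Fj
      · subst hne; simpa [hg] using hv₀N
      · exact ⟨e, he, hsub _ _ (hgM e he hne)⟩
    · intro a ha b hb hab
      by_cases h1 : a = Fj <;> by_cases h2 : b = Fj
      · rw [h1, h2]
      · exfalso
        have : g a = v₀ := by simp [hg, h1]
        exact hv₀ b hb (this ▸ hab ▸ hgM b hb h2)
      · exfalso
        have : g b = v₀ := by simp [hg, h2]
        exact hv₀ a ha (this ▸ hab.symm ▸ hgM a ha h1)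
      · exact hinj a b (g a) (hgM a ha h1) (hab ▸ hgM b hb h2)
  · rcases Set.eq_empty_or_nonempty C' with hE | ⟨e₂, he₂⟩
    · simp [hE]
    have hmv : ∀ e ∈ C', ∃ v, M e v := by
      intro e he
      obtain ⟨v, hv, -⟩ := hmatched e (hsubC he) (fun h => hFj (h ▸ he))
      exact ⟨v, hv⟩
    obtain ⟨v₂, hv₂⟩ := hmv e₂ he₂
    set g : E → V := fun e => if h : ∃ v, M e v then h.choose else v₂ with hg
    have hgM : ∀ e ∈ C', M e (g e) := by
      intro e he
      have h := hmv e he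
      simp only [hg, dif_pos h]
      exact h.choose_spec
    apply Set.ncard_le_ncard_of_injOn g ?_ ?_ hNfin
    · intro e he
      exact ⟨e, he, hsub _ _ (hgM e he)⟩
    · intro a ha b hb hab
      exact hinj a b (g a) (hgM a ha) (hab ▸ hgM b hb)
end

section
/- Let Var be a finite set of 'base variables', and consider two finite index sets modeling an equation system: equations Eq, and for the extended system the equations Eq ⊍ G where G is in bijection with a subset Y ⊆ Var. Model the variable occurrences as follows: each equation in Eq is incident to a finite set of symbols from {y, ẏ : y ∈ Y} ∪ Z (Z a set disjoint from these), each formal coupling equation G_y (y ∈ Y) is incident exactly to {y, ẏ}. Define the equivalence relation R_equal identifying y with ẏ for each y ∈ Y, and R_triv as the identity relation. Then the original system (Eq with variable classes modulo R_equal) satisfies Hall's condition (every subset S ⊆ Eq has |S| ≤ number of R_equal-classes of symbols incident to S) if and only if the extended system (Eq ⊍ G with variable symbols counted modulo R_triv, i.e., individually) satisfies Hall's condition. -/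
open Classical in
/-- Choice of a representative symbol for each class: for a `Y`-class we pick
`(y, false)` when `P y` holds and `(y, true)` otherwise; `Z`-classes are kept. -/
noncomputable def stmt9.gchoice {Y Z : Type*} (P : Y → Prop) : Y ⊕ Z → (Y × Bool) ⊕ Z
  | Sum.inl y => if P y then Sum.inl (y, false) else Sum.inl (y, true)
  | Sum.inr z => Sum.inr z

lemma stmt9.gchoice_map {Y Z : Type*} (P : Y → Prop) (c : Y ⊕ Z) :
    Sum.map Prod.fst id (stmt9.gchoice (Z := Z) P c) = c := by
  rcases c with y | z
  · simp only [stmt9.gchoice]; split <;> rfl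
  · rfl

/-- Fold symbols back onto classes, sending `(y, true)` to the extra `Y`-component. -/
def stmt9.fmap {Y Z : Type*} : (Y × Bool) ⊕ Z → (Y ⊕ Z) ⊕ Y
  | Sum.inl (y, false) => Sum.inl (Sum.inl y)
  | Sum.inl (y, true) => Sum.inr y
  | Sum.inr z => Sum.inl (Sum.inr z)

lemma stmt9.fmap_inj {Y Z : Type*} : Function.Injective (stmt9.fmap (Y := Y) (Z := Z)) := by
  rintro (⟨y, (_|_)⟩ | z) (⟨y', (_|_)⟩ | z') h <;> simp [stmt9.fmap] at h <;> simp [h]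

theorem stmt9 {Eq Y Z : Type*} [Fintype Eq] [Fintype Y] [Fintype Z]
    (inc : Eq → (Y × Bool) ⊕ Z → Prop) :
    -- Hall's condition for the original system, variables counted modulo R_equal
    -- (the symbols y and ẏ, modelled as (y, false) and (y, true), are identified)
    (∀ S : Set Eq,
        S.ncard ≤ ({c : Y ⊕ Z | ∃ e ∈ S, ∃ s, inc e s ∧ Sum.map Prod.fst id s = c} : Set (Y ⊕ Z)).ncard)
      ↔
    -- Hall's condition for the extended system (one formal coupling equation G_y,
    -- incident exactly to {y, ẏ}, per y ∈ Y), symbols counted individually (R_triv)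
    (∀ T : Set (Eq ⊕ Y),
        T.ncard ≤ ({s : (Y × Bool) ⊕ Z | ∃ e ∈ T,
          Sum.elim (fun e' => inc e' s)
            (fun y => s = Sum.inl (y, false) ∨ s = Sum.inl (y, true)) e} : Set ((Y × Bool) ⊕ Z)).ncard) := by
  classical
  constructor
  · -- original ⇒ extended
    intro H T
    set S : Set Eq := {e | Sum.inl e ∈ T} with hS
    set W : Set Y := {y | Sum.inr y ∈ T} with hW
    set N : Set ((Y × Bool) ⊕ Z) := {s | ∃ e ∈ T, Sum.elim (fun e' => inc e' s)
        (fun y => s = Sum.inl (y, false) ∨ s = Sum.inl (y, true)) e} with hN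
    set A : Set (Y ⊕ Z) := {c | ∃ e ∈ S, ∃ s, inc e s ∧ Sum.map Prod.fst id s = c} with hA
    have hT : T = Sum.inl '' S ∪ Sum.inr '' W := by
      ext e; cases e <;> simp [S, W]
    have hdisj : Disjoint (Sum.inl '' S : Set (Eq ⊕ Y)) (Sum.inr '' W) := by
      rw [Set.disjoint_left]
      rintro _ ⟨e, _, rfl⟩ ⟨y, _, h⟩
      simp at h
    have hTcard : T.ncard = S.ncard + W.ncard := by
      rw [hT, Set.ncard_union_eq hdisj,
        Set.ncard_image_of_injective _ Sum.inl_injective,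
        Set.ncard_image_of_injective _ Sum.inr_injective]
    -- choice function sending each incident class to an incident symbol
    set P : Y → Prop := fun y => y ∈ W ∨ Sum.inl (y, false) ∈ N with hP
    set g : Y ⊕ Z → (Y × Bool) ⊕ Z := stmt9.gchoice P with hg
    have hπg : ∀ c, Sum.map Prod.fst id (g c) = c := stmt9.gchoice_map P
    have hginj : Set.InjOn g A := fun a _ b _ h => by
      rw [← hπg a, h, hπg b]
    have hgpos : ∀ y : Y, P y → g (Sum.inl y) = Sum.inl (y, false) := by
      intro y hy; rw [hg]; simp only [stmt9.gchoice]; rw [if_pos hy]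
    have hgneg : ∀ y : Y, ¬ P y → g (Sum.inl y) = Sum.inl (y, true) := by
      intro y hy; rw [hg]; simp only [stmt9.gchoice]; rw [if_neg hy]
    have hgN : ∀ c ∈ A, g c ∈ N := by
      rintro c ⟨e, heS, s, hinc, hπ⟩
      have hsN : s ∈ N := ⟨Sum.inl e, heS, hinc⟩
      rcases c with y | z
      · by_cases hcase : P y
        · rw [hgpos y hcase]
          rcases hcase with hy | hy
          · exact ⟨Sum.inr y, hy, Or.inl rfl⟩
          · exact hy
        · rw [hgneg y hcase]
          rcases s with ⟨y', b⟩ | z'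
          · simp only [Sum.map_inl, Sum.inl.injEq] at hπ
            subst hπ
            cases b
            · exact absurd (Or.inr hsN) hcase
            · exact hsN
          · simp at hπ
      · rcases s with ⟨y', b⟩ | z'
        · simp at hπ
        · simp only [Sum.map_inr, id, Sum.inr.injEq] at hπ
          subst hπ
          exact hsN
    have hhN : ∀ y ∈ W, (Sum.inl (y, true) : (Y × Bool) ⊕ Z) ∈ N :=
      fun y hy => ⟨Sum.inr y, hy, Or.inr rfl⟩
    have hdisj2 : Disjoint (g '' A) ((fun y => (Sum.inl (y, true) : (Y × Bool) ⊕ Z)) '' W) := by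
      rw [Set.disjoint_left]
      rintro _ ⟨c, hc, rfl⟩ ⟨y, hyW, hy⟩
      rcases c with y' | z
      · by_cases hcase : P y'
        · rw [hgpos y' hcase] at hy
          simp at hy
        · rw [hgneg y' hcase] at hy
          simp only [Sum.inl.injEq, Prod.mk.injEq] at hy
          exact hcase (Or.inl (hy.1 ▸ hyW))
      · have : g (Sum.inr z) = Sum.inr z := rfl
        rw [this] at hy
        simp at hy
    have hsub : g '' A ∪ (fun y => (Sum.inl (y, true) : (Y × Bool) ⊕ Z)) '' W ⊆ N := by
      rintro s (⟨c, hc, rfl⟩ | ⟨y, hy, rfl⟩)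
      · exact hgN c hc
      · exact hhN y hy
    calc T.ncard = S.ncard + W.ncard := hTcard
      _ ≤ A.ncard + W.ncard := Nat.add_le_add_right (H S) _
      _ = (g '' A).ncard + ((fun y => (Sum.inl (y, true) : (Y × Bool) ⊕ Z)) '' W).ncard := by
          rw [Set.ncard_image_of_injOn hginj,
            Set.ncard_image_of_injective _ (fun a b h => by simpa using h)]
      _ = (g '' A ∪ (fun y => (Sum.inl (y, true) : (Y × Bool) ⊕ Z)) '' W).ncard :=
          (Set.ncard_union_eq hdisj2).symm
      _ ≤ N.ncard := Set.ncard_le_ncard hsub (Set.toFinite N)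
  · -- extended ⇒ original
    intro H S
    set A : Set (Y ⊕ Z) := {c | ∃ e ∈ S, ∃ s, inc e s ∧ Sum.map Prod.fst id s = c} with hA
    set AY : Set Y := {y | Sum.inl y ∈ A} with hAY
    set T : Set (Eq ⊕ Y) := Sum.inl '' S ∪ Sum.inr '' AY with hTdef
    set N : Set ((Y × Bool) ⊕ Z) := {s | ∃ e ∈ T, Sum.elim (fun e' => inc e' s)
        (fun y => s = Sum.inl (y, false) ∨ s = Sum.inl (y, true)) e} with hN
    have hdisj : Disjoint (Sum.inl '' S : Set (Eq ⊕ Y)) (Sum.inr '' AY) := by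
      rw [Set.disjoint_left]
      rintro _ ⟨e, _, rfl⟩ ⟨y, _, h⟩
      simp at h
    have hTcard : T.ncard = S.ncard + AY.ncard := by
      rw [hTdef, Set.ncard_union_eq hdisj,
        Set.ncard_image_of_injective _ Sum.inl_injective,
        Set.ncard_image_of_injective _ Sum.inr_injective]
    set U : Set ((Y ⊕ Z) ⊕ Y) := Sum.inl '' A ∪ Sum.inr '' AY with hU
    have hfU : ∀ s ∈ N, stmt9.fmap s ∈ U := by
      rintro s ⟨e, heT, he⟩
      rcases e with e' | y
      · have heS : e' ∈ S := by
          rcases heT with ⟨e'', he'', heq⟩ | ⟨y', _, heq⟩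
          · cases heq; exact he''
          · simp at heq
        have hcA : (Sum.map Prod.fst id s : Y ⊕ Z) ∈ A := ⟨e', heS, s, he, rfl⟩
        rcases s with ⟨y, b⟩ | z
        · have hyAY : y ∈ AY := hcA
          cases b
          · exact Or.inl ⟨Sum.inl y, hcA, rfl⟩
          · exact Or.inr ⟨y, hyAY, rfl⟩
        · exact Or.inl ⟨Sum.inr z, hcA, rfl⟩
      · have hyAY : y ∈ AY := by
          rcases heT with ⟨e'', _, heq⟩ | ⟨y', hy', heq⟩
          · simp at heq
          · cases heq; exact hy'
        rcases he with rfl | rfl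
        · exact Or.inl ⟨Sum.inl y, hyAY, rfl⟩
        · exact Or.inr ⟨y, hyAY, rfl⟩
    have hdisjU : Disjoint (Sum.inl '' A : Set ((Y ⊕ Z) ⊕ Y)) (Sum.inr '' AY) := by
      rw [Set.disjoint_left]
      rintro _ ⟨c, _, rfl⟩ ⟨y, _, h⟩
      simp at h
    have hUcard : U.ncard = A.ncard + AY.ncard := by
      rw [hU, Set.ncard_union_eq hdisjU,
        Set.ncard_image_of_injective _ Sum.inl_injective,
        Set.ncard_image_of_injective _ Sum.inr_injective]
    have hNU : N.ncard ≤ U.ncard :=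
      Set.ncard_le_ncard_of_injOn stmt9.fmap hfU (stmt9.fmap_inj.injOn) (Set.toFinite U)
    have := H T
    rw [← hN] at this
    omega
end
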